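/- Let X be a separable reflexive Banach space with property (m_p) for some p > 1, and let T be a bounded linear operator on X. If there exists a maximizing sequence for T with no norm-convergent subsequence, then the essential norm of T equals the norm of T. -/

import Mathlib

open Filter Topology

/-- Weak convergence of a sequence in a normed space. -/
def WeakTendsto {X : Type*} [NormedAddCommGroup X] [NormedSpace ℝ X]
    (x : ℕ → X) (x₀ : X) : Prop :=
  ∀ f : X →L[ℝ] ℝ, Tendsto (fun n => f (x n)) atTop (𝓝 (f x₀))

/-- Property (m_p). -/
def PropertyMp {X : Type*} [NormedAddCommGroup X] [NormedSpace ℝ X] (p : ℝ) : Prop :=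
  ∀ x : ℕ → X, WeakTendsto x 0 → ∀ y : X,
    limsup (fun n => ‖x n + y‖ ^ p) atTop = limsup (fun n => ‖x n‖ ^ p) atTop + ‖y‖ ^ p

/-- A maximizing sequence for a bounded operator: unit vectors with ‖T xₙ‖ → ‖T‖. -/
def MaximizingSeq {X : Type*} [NormedAddCommGroup X] [NormedSpace ℝ X]
    (T : X →L[ℝ] X) (x : ℕ → X) : Prop :=
  (∀ n, ‖x n‖ = 1) ∧ Tendsto (fun n => ‖T (x n)‖) atTop (𝓝 ‖T‖)

/-- Weak cluster point of some maximizing sequence for T. -/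
def WeakClusterPtOfMaximizing {X : Type*} [NormedAddCommGroup X] [NormedSpace ℝ X]
    (T : X →L[ℝ] X) (x₀ : X) : Prop :=
  ∃ x : ℕ → X, MaximizingSeq T x ∧ ∃ φ : ℕ → ℕ, StrictMono φ ∧ WeakTendsto (x ∘ φ) x₀

/-- The essential norm: distance to the compact operators. -/
noncomputable def essNorm {X : Type*} [NormedAddCommGroup X] [NormedSpace ℝ X]
    (T : X →L[ℝ] X) : ℝ :=
  sInf {c : ℝ | ∃ K : X →L[ℝ] X, IsCompactOperator K ∧ c = ‖T - K‖}

/-!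
Pass to a subsequence of the maximizing sequence converging weakly to some `x₀`: `X` is reflexive
and separable, so `X*` is separable and the sequential Banach–Alaoglu theorem applies in `X** = X`.
Write `x n = x₀ + y n` with `y` weakly null and, along a further subsequence, `‖y n‖ → ℓ` and
`‖T (y n)‖ → m`; `ℓ > 0` because no subsequence converges in norm. Property (m_p), applied to `y`
and to `T y`, gives `‖T‖ ℓ ≤ m`, while a compact `K` maps `y` to a norm-null sequence, so
`m ≤ ‖T - K‖ ℓ`. Hence `‖T‖ ≤ ‖T - K‖` for every compact `K`.
-/

open NormedSpace TopologicalSpace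

section SeparableDual

variable {E : Type*} [NormedAddCommGroup E] [NormedSpace ℝ E]

theorem Submodule.exists_strongDual_eq_zero_of_notMem {M : Submodule ℝ E}
    (hM : IsClosed (M : Set E)) {v : E} (hv : v ∉ M) :
    ∃ G : StrongDual ℝ E, (∀ a ∈ M, G a = 0) ∧ G v ≠ 0 := by
  obtain ⟨G, u, hGM, huv⟩ := geometric_hahn_banach_closed_point M.convex hM hv
  have hu : 0 < u := by simpa using hGM 0 M.zero_mem
  -- `G` is bounded above on the subspace `M`, hence vanishes on it.
  have hG : ∀ a ∈ M, G a = 0 := by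
    intro a ha
    by_contra hGa
    have := hGM (((u + 1) / G a) • a) (M.smul_mem _ ha)
    rw [map_smul, smul_eq_mul, div_mul_cancel₀ _ hGa] at this
    linarith
  exact ⟨G, hG, by linarith⟩

theorem separableSpace_of_separableSpace_strongDual [SeparableSpace (StrongDual ℝ E)] :
    SeparableSpace E := by
  obtain ⟨D, hDc, hDd⟩ := exists_countable_dense (StrongDual ℝ E)
  have hnorming : ∀ f : StrongDual ℝ E, ∃ y : E, ‖y‖ ≤ 1 ∧ ‖f‖ / 2 ≤ ‖f y‖ := by
    intro f
    rcases eq_or_ne f 0 with rfl | hf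
    · exact ⟨0, by simp⟩
    · obtain ⟨y, hy, hfy⟩ := f.exists_lt_apply_of_lt_opNorm (half_lt_self (norm_pos_iff.2 hf))
      exact ⟨y, hy.le, hfy.le⟩
  choose g hg_norm hg_apply using hnorming
  set M := (Submodule.span ℝ (g '' D)).topologicalClosure
  -- `g f` almost attains `‖f‖`, so a functional vanishing on `M` keeps distance `‖G‖ / 3` from `D`.
  have hannihilator : ∀ G : StrongDual ℝ E, (∀ a ∈ M, G a = 0) → G = 0 := by
    intro G hG
    have hbound : ∀ f, ‖G‖ ≤ 3 * ‖G - f‖ := by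
      refine hDd.induction (fun f hf => ?_) (isClosed_le (by fun_prop) (by fun_prop))
      have hgf : g f ∈ M :=
        Submodule.le_topologicalClosure _ (Submodule.subset_span ⟨f, hf, rfl⟩)
      have : ‖f‖ / 2 ≤ ‖G - f‖ :=
        calc ‖f‖ / 2 ≤ ‖f (g f)‖ := hg_apply f
          _ = ‖(G - f) (g f)‖ := by simp [hG _ hgf]
          _ ≤ ‖G - f‖ * ‖g f‖ := (G - f).le_opNorm _
          _ ≤ ‖G - f‖ := mul_le_of_le_one_right (norm_nonneg _) (hg_norm f)
      linarith [norm_le_norm_add_norm_sub' G f, norm_sub_rev G f]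
    simpa using hbound G
  have hM : ∀ v, v ∈ M := by
    intro v
    by_contra hv
    obtain ⟨G, hGM, hGv⟩ := Submodule.exists_strongDual_eq_zero_of_notMem
      (Submodule.isClosed_topologicalClosure _) hv
    exact hGv (by simp [hannihilator G hGM])
  have hspan := (hDc.image g).isSeparable.span (R := ℝ)
  refine isSeparable_univ_iff.1 (hspan.closure.mono fun v _ => ?_)
  simpa [M, ← Submodule.topologicalClosure_coe] using hM v

end SeparableDual

section WeakConvergence

variable {X Y : Type*} [NormedAddCommGroup X] [NormedSpace ℝ X]
  [NormedAddCommGroup Y] [NormedSpace ℝ Y]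

theorem separableSpace_strongDual_of_surjective_inclusionInDoubleDual [SeparableSpace X]
    (hrefl : Function.Surjective (inclusionInDoubleDual ℝ X)) :
    SeparableSpace (StrongDual ℝ X) :=
  have : SeparableSpace (StrongDual ℝ (StrongDual ℝ X)) :=
    hrefl.denseRange.separableSpace (inclusionInDoubleDual ℝ X).continuous
  separableSpace_of_separableSpace_strongDual

-- Sequential Banach–Alaoglu in the weak-* dual of `StrongDual ℝ X`, which is `X` by reflexivity.
theorem exists_strictMono_weakTendsto_of_bounded [SeparableSpace (StrongDual ℝ X)]
    (hrefl : Function.Surjective (inclusionInDoubleDual ℝ X)) {x : ℕ → X} {C : ℝ}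
    (hC : ∀ n, ‖x n‖ ≤ C) :
    ∃ (φ : ℕ → ℕ) (x₀ : X), StrictMono φ ∧ WeakTendsto (x ∘ φ) x₀ := by
  obtain ⟨F, -, φ, hφ, hF⟩ := WeakDual.isSeqCompact_closedBall ℝ (StrongDual ℝ X) 0 C
    (x := fun n => StrongDual.toWeakDual (inclusionInDoubleDual ℝ X (x n)))
    fun n => by simpa using (double_dual_bound ℝ X (x n)).trans (hC n)
  obtain ⟨x₀, hx₀⟩ := hrefl (WeakDual.toStrongDual F)
  refine ⟨φ, x₀, hφ, fun f => ?_⟩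
  have hFf : F f = f x₀ := by rw [← WeakDual.toStrongDual_apply, ← hx₀]; rfl
  simpa [Function.comp_def, hFf] using ((WeakDual.eval_continuous f).tendsto F).comp hF

theorem WeakTendsto.comp_strictMono {x : ℕ → X} {x₀ : X} (hx : WeakTendsto x x₀)
    {φ : ℕ → ℕ} (hφ : StrictMono φ) : WeakTendsto (x ∘ φ) x₀ :=
  fun f => (hx f).comp hφ.tendsto_atTop

theorem WeakTendsto.sub_limit {x : ℕ → X} {x₀ : X} (hx : WeakTendsto x x₀) :
    WeakTendsto (fun n => x n - x₀) 0 :=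
  fun f => by simpa using (hx f).sub_const (f x₀)

theorem WeakTendsto.map {x : ℕ → X} {x₀ : X} (hx : WeakTendsto x x₀) (T : X →L[ℝ] Y) :
    WeakTendsto (fun n => T (x n)) (T x₀) :=
  fun f => hx (f.comp T)

theorem IsCompactOperator.tendsto_zero_of_weakTendsto_zero {K : X →L[ℝ] Y}
    (hK : IsCompactOperator K) {y : ℕ → X} {C : ℝ} (hC : ∀ n, ‖y n‖ ≤ C)
    (hy : WeakTendsto y 0) : Tendsto (fun n => K (y n)) atTop (𝓝 0) := by
  obtain ⟨S, hS, hKS⟩ := hK.image_closedBall_subset_compact (f := (K : X →ₗ[ℝ] Y)) C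
  refine hS.tendsto_nhds_of_unique_mapClusterPt
    (Eventually.of_forall fun n => hKS ⟨y n, mem_closedBall_zero_iff.2 (hC n), rfl⟩)
    fun a _ ha => ?_
  -- A norm cluster point of `K y` is a weak one, and `K y` is weakly null.
  refine SeparatingDual.eq_zero_of_forall_dual_eq_zero (R := ℝ) fun f => ?_
  obtain ⟨ψ, hψ, hfa⟩ := (ha.tendsto_comp (f.continuous.tendsto a)).tendsto_subseq
  have hfKy := (hy.map K f).comp hψ.tendsto_atTop
  rw [map_zero, map_zero] at hfKy
  exact tendsto_nhds_unique hfa hfKy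

theorem exists_strictMono_tendsto_norm_and_norm_apply (T : X →L[ℝ] Y) {y : ℕ → X} {C : ℝ}
    (hC : ∀ n, ‖y n‖ ≤ C) :
    ∃ (ψ : ℕ → ℕ) (ℓ m : ℝ), StrictMono ψ ∧ Tendsto (fun n => ‖y (ψ n)‖) atTop (𝓝 ℓ) ∧
      Tendsto (fun n => ‖T (y (ψ n))‖) atTop (𝓝 m) := by
  obtain ⟨⟨ℓ, m⟩, -, ψ, hψ, hlim⟩ := tendsto_subseq_of_bounded
    (Metric.isBounded_Icc 0 C |>.prod (Metric.isBounded_Icc 0 (‖T‖ * C)))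
    (x := fun n => (‖y n‖, ‖T (y n)‖))
    fun n => ⟨⟨norm_nonneg _, hC n⟩, ⟨norm_nonneg _, T.le_of_opNorm_le_of_le le_rfl (hC n)⟩⟩
  exact ⟨ψ, ℓ, m, hψ, hlim.fst_nhds, hlim.snd_nhds⟩

end WeakConvergence

section EssentialNorm

variable {X : Type*} [NormedAddCommGroup X] [NormedSpace ℝ X]

theorem MaximizingSeq.comp_strictMono {T : X →L[ℝ] X} {x : ℕ → X} (hx : MaximizingSeq T x)
    {φ : ℕ → ℕ} (hφ : StrictMono φ) : MaximizingSeq T (x ∘ φ) :=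
  ⟨fun n => hx.1 (φ n), hx.2.comp hφ.tendsto_atTop⟩

theorem PropertyMp.rpow_eq_add_of_tendsto {p : ℝ} (hmp : PropertyMp (X := X) p) (hp : 0 < p)
    {y : ℕ → X} (hy : WeakTendsto y 0) (z : X) {ℓ r : ℝ}
    (hℓ : Tendsto (fun n => ‖y n‖) atTop (𝓝 ℓ)) (hr : Tendsto (fun n => ‖y n + z‖) atTop (𝓝 r)) :
    r ^ p = ℓ ^ p + ‖z‖ ^ p := by
  have h := hmp y hy z
  rwa [(hr.rpow_const (Or.inr hp.le)).limsup_eq, (hℓ.rpow_const (Or.inr hp.le)).limsup_eq] at h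

-- With `y = x - x₀`, (m_p) splits `1 = ℓ^p + ‖x₀‖^p` and `‖T‖^p = m^p + ‖T x₀‖^p`;
-- since `‖T x₀‖ ≤ ‖T‖ ‖x₀‖`, the weakly null part `y` must carry `(‖T‖ ℓ)^p ≤ m^p`.
theorem PropertyMp.norm_mul_le_of_maximizingSeq {p : ℝ} (hmp : PropertyMp (X := X) p)
    (hp : 0 < p) {T : X →L[ℝ] X} {x : ℕ → X} (hx : MaximizingSeq T x) {x₀ : X}
    (hw : WeakTendsto x x₀) {ℓ m : ℝ} (hℓ : Tendsto (fun n => ‖x n - x₀‖) atTop (𝓝 ℓ))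
    (hm : Tendsto (fun n => ‖T (x n - x₀)‖) atTop (𝓝 m)) :
    ‖T‖ * ℓ ≤ m := by
  have hℓ0 : 0 ≤ ℓ := ge_of_tendsto' hℓ fun n => norm_nonneg _
  have hm0 : 0 ≤ m := ge_of_tendsto' hm fun n => norm_nonneg _
  have hunit : (1 : ℝ) = ℓ ^ p + ‖x₀‖ ^ p := by
    refine Real.one_rpow p ▸ hmp.rpow_eq_add_of_tendsto hp hw.sub_limit x₀ hℓ ?_
    simp [hx.1]
  have hnorm : ‖T‖ ^ p = m ^ p + ‖T x₀‖ ^ p := by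
    refine hmp.rpow_eq_add_of_tendsto hp (by simpa using hw.sub_limit.map T) (T x₀) hm ?_
    simpa using hx.2
  have hTx₀ : ‖T x₀‖ ^ p ≤ ‖T‖ ^ p * ‖x₀‖ ^ p := by
    rw [← Real.mul_rpow (norm_nonneg _) (norm_nonneg _)]
    exact Real.rpow_le_rpow (norm_nonneg _) (T.le_opNorm x₀) hp.le
  refine (Real.rpow_le_rpow_iff (by positivity) hm0 hp).1 ?_
  calc (‖T‖ * ℓ) ^ p = ‖T‖ ^ p - ‖T‖ ^ p * ‖x₀‖ ^ p := by
        rw [Real.mul_rpow (norm_nonneg _) hℓ0, eq_sub_of_add_eq hunit.symm]; ring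
    _ ≤ m ^ p := by linarith

theorem IsCompactOperator.le_norm_sub_mul_of_tendsto {T K : X →L[ℝ] X} (hK : IsCompactOperator K)
    {y : ℕ → X} {C : ℝ} (hC : ∀ n, ‖y n‖ ≤ C) (hy : WeakTendsto y 0) {ℓ m : ℝ}
    (hℓ : Tendsto (fun n => ‖y n‖) atTop (𝓝 ℓ)) (hm : Tendsto (fun n => ‖T (y n)‖) atTop (𝓝 m)) :
    m ≤ ‖T - K‖ * ℓ := by
  have hKy := (hK.tendsto_zero_of_weakTendsto_zero hC hy).norm
  rw [norm_zero] at hKy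
  refine le_of_tendsto_of_tendsto' hm (by simpa using (hℓ.const_mul ‖T - K‖).add hKy) fun n => ?_
  calc ‖T (y n)‖ = ‖(T - K) (y n) + K (y n)‖ := by simp
    _ ≤ ‖(T - K) (y n)‖ + ‖K (y n)‖ := norm_add_le _ _
    _ ≤ ‖T - K‖ * ‖y n‖ + ‖K (y n)‖ := by gcongr; exact (T - K).le_opNorm _

theorem essNorm_eq_norm_of_forall_le {T : X →L[ℝ] X}
    (h : ∀ K : X →L[ℝ] X, IsCompactOperator K → ‖T‖ ≤ ‖T - K‖) : essNorm T = ‖T‖ := by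
  set S := {c : ℝ | ∃ K : X →L[ℝ] X, IsCompactOperator K ∧ c = ‖T - K‖}
  have hT : ‖T‖ ∈ S := ⟨0, isCompactOperator_zero, by simp⟩
  have hlower : ‖T‖ ∈ lowerBounds S := by
    rintro c ⟨K, hK, rfl⟩
    exact h K hK
  exact le_antisymm (csInf_le ⟨_, hlower⟩ hT) (le_csInf ⟨_, hT⟩ hlower)

end EssentialNorm

theorem stmt2_general {X : Type*} [NormedAddCommGroup X] [NormedSpace ℝ X]
    [TopologicalSpace.SeparableSpace X]
    (hrefl : Function.Surjective (NormedSpace.inclusionInDoubleDual ℝ X))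
    {p : ℝ} (hp : 1 < p) (hmp : PropertyMp (X := X) p)
    (T : X →L[ℝ] X) (x : ℕ → X) (hx : MaximizingSeq T x)
    (hnoconv : ¬ ∃ (φ : ℕ → ℕ) (y : X), StrictMono φ ∧ Tendsto (x ∘ φ) atTop (𝓝 y)) :
    essNorm T = ‖T‖ := by
  have := separableSpace_strongDual_of_surjective_inclusionInDoubleDual hrefl
  obtain ⟨φ, x₀, hφ, hw⟩ := exists_strictMono_weakTendsto_of_bounded hrefl (x := x) (C := 1)
    fun n => (hx.1 n).le
  have hy : ∀ n, ‖x (φ n) - x₀‖ ≤ 1 + ‖x₀‖ := fun n =>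
    (norm_sub_le _ _).trans_eq (by rw [hx.1])
  obtain ⟨ψ, ℓ, m, hψ, hℓ, hm⟩ := exists_strictMono_tendsto_norm_and_norm_apply T hy
  have hℓ0 : 0 < ℓ := by
    refine (ge_of_tendsto' hℓ fun n => norm_nonneg _).lt_of_ne fun hℓ_eq => ?_
    exact hnoconv ⟨φ ∘ ψ, x₀, hφ.comp hψ, tendsto_iff_norm_sub_tendsto_zero.2 (hℓ_eq ▸ hℓ)⟩
  refine essNorm_eq_norm_of_forall_le fun K hK => le_of_mul_le_mul_right ?_ hℓ0
  calc ‖T‖ * ℓ ≤ m := hmp.norm_mul_le_of_maximizingSeq (zero_lt_one.trans hp)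
        (hx.comp_strictMono (hφ.comp hψ)) (hw.comp_strictMono hψ) hℓ hm
    _ ≤ ‖T - K‖ * ℓ := hK.le_norm_sub_mul_of_tendsto (fun n => hy (ψ n))
        (hw.sub_limit.comp_strictMono hψ) hℓ hm

theorem stmt2 {X : Type*} [NormedAddCommGroup X] [NormedSpace ℝ X] [CompleteSpace X]
    [TopologicalSpace.SeparableSpace X]
    (hrefl : Function.Surjective (NormedSpace.inclusionInDoubleDual ℝ X))
    {p : ℝ} (hp : 1 < p) (hmp : PropertyMp (X := X) p)
    (T : X →L[ℝ] X) (x : ℕ → X) (hx : MaximizingSeq T x)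
    (hnoconv : ¬ ∃ (φ : ℕ → ℕ) (y : X), StrictMono φ ∧ Tendsto (x ∘ φ) atTop (𝓝 y)) :
    essNorm T = ‖T‖ :=
  stmt2_general hrefl hp hmp T x hx hnoconv
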